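/- arXiv:1206.5937 — 2 statements merged into one kernel-verified Lean document; each statement's English description precedes it below -/
import Mathlib

section
/- The parameters (v_f, K, a) of May's diagram are identifiable: if v_f, v_f' > 0, K, K' > 0, a, a' > 0 and v_f·exp(−K ρ^a) = v_f'·exp(−K' ρ^{a'}) for all ρ > 0, then v_f = v_f', K = K', and a = a'. -/
/-!
Letting `ρ → 0⁺` kills both exponents (since `a, a' > 0`), so the two sides tend to `v_f` and
`v_f'`, which are therefore equal. Cancelling `v_f` and taking logarithms leaves
`K ρ^a = K' ρ^{a'}` for all `ρ > 0`; `ρ = 1` gives `K = K'`, and then `ρ = e` gives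
`e^a = e^{a'}`, i.e. `a = a'`.
-/

open Filter Topology Real

theorem tendsto_mul_exp_neg_mul_rpow_nhdsGT_zero (v K : ℝ) {a : ℝ} (ha : 0 < a) :
    Tendsto (fun ρ : ℝ => v * exp (-K * ρ ^ a)) (𝓝[>] 0) (𝓝 v) := by
  have hpow : Tendsto (fun ρ : ℝ => ρ ^ a) (𝓝[>] 0) (𝓝 0) := by
    simpa [zero_rpow ha.ne'] using
      (continuousAt_rpow_const 0 a (Or.inr ha.le)).tendsto.mono_left nhdsWithin_le_nhds
  simpa using ((hpow.const_mul (-K)).rexp).const_mul v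

theorem eq_and_eq_of_forall_mul_rpow_eq {K K' a a' : ℝ} (hK : K ≠ 0)
    (h : ∀ ρ > (0 : ℝ), K * ρ ^ a = K' * ρ ^ a') : K = K' ∧ a = a' := by
  have hKK' : K = K' := by simpa using h 1 one_pos
  refine ⟨hKK', exp_injective (mul_left_cancel₀ hK ?_)⟩
  simpa [exp_one_rpow, ← hKK'] using h (exp 1) (exp_pos 1)

theorem mays_identifiability_general (v_f v_f' K K' a a' : ℝ)
    (hv : 0 < v_f) (hK : 0 < K) (ha : 0 < a) (ha' : 0 < a')
    (h : ∀ ρ > (0:ℝ), v_f * Real.exp (-K * ρ ^ a) = v_f' * Real.exp (-K' * ρ ^ a')) :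
    v_f = v_f' ∧ K = K' ∧ a = a' := by
  have hvv' : v_f = v_f' :=
    tendsto_nhds_unique (tendsto_mul_exp_neg_mul_rpow_nhdsGT_zero v_f K ha)
      ((tendsto_mul_exp_neg_mul_rpow_nhdsGT_zero v_f' K' ha').congr'
        (eventually_nhdsWithin_of_forall fun ρ hρ => (h ρ hρ).symm))
  subst hvv'
  have hexponents : ∀ ρ > (0 : ℝ), K * ρ ^ a = K' * ρ ^ a' := fun ρ hρ =>
    neg_inj.mp (by simpa only [neg_mul] using exp_injective (mul_left_cancel₀ hv.ne' (h ρ hρ)))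
  exact ⟨rfl, eq_and_eq_of_forall_mul_rpow_eq hK.ne' hexponents⟩

theorem mays_identifiability (v_f v_f' K K' a a' : ℝ)
    (hv : 0 < v_f) (hv' : 0 < v_f') (hK : 0 < K) (hK' : 0 < K') (ha : 0 < a) (ha' : 0 < a')
    (h : ∀ ρ > (0:ℝ), v_f * Real.exp (-K * ρ ^ a) = v_f' * Real.exp (-K' * ρ ^ a')) :
    v_f = v_f' ∧ K = K' ∧ a = a' :=
  mays_identifiability_general v_f v_f' K K' a a' hv hK ha ha' h
end

section
/- The maximum flow (capacity) for May's diagram equals Q(ρ_c) = ρ_c · v_f · exp(−1/a), and Q is strictly increasing on (0, ρ_c] and strictly decreasing on [ρ_c, ∞). -/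
/-! After rescaling, `Q ρ = ρ_c v_f g (ρ / ρ_c)` with `g x = x exp (-x^a / a)`, and
`g' x = exp (-x^a / a) (1 - x^a)` is positive on `(0, 1)` and negative on `(1, ∞)`. -/

open Real Set

noncomputable def mayProfile (a x : ℝ) : ℝ := x * exp (-(1 / a) * x ^ a)

theorem mayProfile_one (a : ℝ) : mayProfile a 1 = exp (-1 / a) := by
  rw [mayProfile, one_rpow, one_mul, mul_one, neg_div]

theorem hasDerivAt_mayProfile {a x : ℝ} (ha : a ≠ 0) (hx : 0 < x) :
    HasDerivAt (mayProfile a) (exp (-(1 / a) * x ^ a) * (1 - x ^ a)) x := by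
  have hpow : HasDerivAt (fun y : ℝ => y ^ a) (a * x ^ (a - 1)) x :=
    hasDerivAt_rpow_const (Or.inl hx.ne')
  refine ((hasDerivAt_id' x).mul ((hpow.const_mul (-(1 / a))).exp)).congr_deriv ?_
  have hxa : x * x ^ (a - 1) = x ^ a := by
    rw [mul_comm, ← rpow_add_one hx.ne', sub_add_cancel]
  rw [← hxa]
  field_simp
  ring

theorem strictMonoOn_mayProfile {a : ℝ} (ha : 0 < a) : StrictMonoOn (mayProfile a) (Ioc 0 1) := by
  refine strictMonoOn_of_hasDerivWithinAt_pos (convex_Ioc 0 1)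
    (f' := fun x => exp (-(1 / a) * x ^ a) * (1 - x ^ a))
    (fun x hx => (hasDerivAt_mayProfile ha.ne' hx.1).continuousAt.continuousWithinAt)
    (fun x hx => ?_) (fun x hx => ?_)
  all_goals rw [interior_Ioc] at hx
  · exact (hasDerivAt_mayProfile ha.ne' hx.1).hasDerivWithinAt
  · exact mul_pos (exp_pos _) (sub_pos.mpr (rpow_lt_one hx.1.le hx.2 ha))

theorem strictAntiOn_mayProfile {a : ℝ} (ha : 0 < a) : StrictAntiOn (mayProfile a) (Ici 1) := by
  refine strictAntiOn_of_hasDerivWithinAt_neg (convex_Ici 1)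
    (f' := fun x => exp (-(1 / a) * x ^ a) * (1 - x ^ a))
    (fun x hx => (hasDerivAt_mayProfile ha.ne' (one_pos.trans_le hx)).continuousAt.continuousWithinAt)
    (fun x hx => ?_) (fun x hx => ?_)
  all_goals rw [interior_Ici] at hx
  · exact (hasDerivAt_mayProfile ha.ne' (one_pos.trans hx)).hasDerivWithinAt
  · exact mul_neg_of_pos_of_neg (exp_pos _) (sub_neg.mpr (one_lt_rpow hx ha))

theorem mays_capacity (v_f ρ_c a : ℝ) (hv : 0 < v_f) (hρc : 0 < ρ_c) (ha : 0 < a)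
    (V Q : ℝ → ℝ)
    (hV : ∀ ρ, V ρ = v_f * Real.exp (-(1/a) * (ρ/ρ_c) ^ a))
    (hQ : ∀ ρ, Q ρ = ρ * V ρ) :
    Q ρ_c = ρ_c * v_f * Real.exp (-1/a) ∧
      StrictMonoOn Q (Set.Ioc 0 ρ_c) ∧ StrictAntiOn Q (Set.Ici ρ_c) := by
  have hQ_profile : ∀ ρ, Q ρ = ρ_c * v_f * mayProfile a (ρ / ρ_c) := by
    intro ρ
    rw [hQ, hV, mayProfile]
    field_simp
  have hscale : 0 < ρ_c * v_f := mul_pos hρc hv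
  refine ⟨by rw [hQ_profile, div_self hρc.ne', mayProfile_one], ?_, ?_⟩
  · intro x hx y hy hxy
    rw [hQ_profile, hQ_profile]
    refine mul_lt_mul_of_pos_left (strictMonoOn_mayProfile ha ?_ ?_ ?_) hscale
    · exact ⟨div_pos hx.1 hρc, (div_le_one hρc).mpr hx.2⟩
    · exact ⟨div_pos hy.1 hρc, (div_le_one hρc).mpr hy.2⟩
    · exact div_lt_div_of_pos_right hxy hρc
  · intro x hx y hy hxy
    rw [hQ_profile, hQ_profile]
    refine mul_lt_mul_of_pos_left (strictAntiOn_mayProfile ha ?_ ?_ ?_) hscale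
    · exact (one_le_div hρc).mpr hx
    · exact (one_le_div hρc).mpr hy
    · exact div_lt_div_of_pos_right hxy hρc
end
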